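/- The precedence relation ≺ is a partial order on the positive rationals: it is reflexive (α ≺ α for all α), antisymmetric (α ≺ β and β ≺ α imply α = β), and transitive (α ≺ β and β ≺ γ imply α ≺ γ). -/

import Mathlib

namespace ResolutionGraph

/-- The value of the continued fraction `[a₁, …, aₙ] = a₁ + 1/[a₂, …, aₙ]`. -/
def cfVal : List ℕ → ℚ
  | [] => 0
  | [a] => (a : ℚ)
  | a :: b :: rest => (a : ℚ) + 1 / cfVal (b :: rest)

/-- `L = (a₁, …, aₙ)` is a continued fraction expansion of `q`:
`n ≥ 1`, `a₁ ≥ 0`, `a₂, …, aₙ ≥ 1` and `[a₁, …, aₙ] = q`. -/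
def IsExpansion (L : List ℕ) (q : ℚ) : Prop :=
  L ≠ [] ∧ (∀ x ∈ L.tail, 1 ≤ x) ∧ cfVal L = q

/-- `q` has length `m`, i.e. some expansion `(a₁, …, aₙ)` of `q` satisfies `a₁ + ⋯ + aₙ = m`. -/
def HasLen (q : ℚ) (m : ℕ) : Prop :=
  ∃ L : List ℕ, IsExpansion L q ∧ L.sum = m

/-- `α ∼ β` : one of them has an expansion `[a₁, …, a_k]` and the other equals
`[a₁, …, a_k, n]` for some integer `n ≥ 1`. -/
def Related (α β : ℚ) : Prop :=
  (∃ (L : List ℕ) (n : ℕ), 1 ≤ n ∧ IsExpansion L α ∧ cfVal (L ++ [n]) = β) ∨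
  (∃ (L : List ℕ) (n : ℕ), 1 ≤ n ∧ IsExpansion L β ∧ cfVal (L ++ [n]) = α)

/-- `γ` is the value of the convolution `α ∗ β`, computed from a witness of `α ∼ β`:
for an expansion `[a₁, …, a_k]` of one of them with the other equal to `[a₁, …, a_k, n]`
(`n ≥ 1` an integer), `γ = [a₁, …, a_k, n + 1]`. -/
def ConvWitness (α β γ : ℚ) : Prop :=
  ∃ (L : List ℕ) (n : ℕ), 1 ≤ n ∧
    ((IsExpansion L α ∧ cfVal (L ++ [n]) = β) ∨ (IsExpansion L β ∧ cfVal (L ++ [n]) = α)) ∧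
    cfVal (L ++ [n + 1]) = γ

/-- `α ≺ β` : `β` has an expansion `[a₁, …, a_k]` and `α = [a₁, …, a_ℓ, b]` for some
`0 ≤ ℓ ≤ k − 1` and `1 ≤ b ≤ a_{ℓ+1}`. -/
def Precedes (α β : ℚ) : Prop :=
  ∃ L : List ℕ, IsExpansion L β ∧ ∃ ℓ : ℕ, ∃ h : ℓ < L.length, ∃ b : ℕ,
    1 ≤ b ∧ b ≤ L.get ⟨ℓ, h⟩ ∧ cfVal (L.take ℓ ++ [b]) = α

/-- `α` immediately precedes `β` : `α ≺ β` and `|β| = |α| + 1`. -/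
def ImmediatelyPrecedes (α β : ℚ) : Prop :=
  Precedes α β ∧ ∃ a : ℕ, HasLen α a ∧ HasLen β (a + 1)

/-! ### Auxiliary: values of binary words (Stern–Brocot style) -/

def val : List Bool → ℚ
  | [] => 1
  | true :: w => val w + 1
  | false :: w => val w / (val w + 1)

lemma val_pos : ∀ w, 0 < val w
  | [] => one_pos
  | true :: w => by have := val_pos w; show (0:ℚ) < val w + 1; linarith
  | false :: w => by
      have := val_pos w; show (0:ℚ) < val w / (val w + 1); positivity

lemma one_lt_val_true (w) : 1 < val (true :: w) := by
  have := val_pos w; show (1:ℚ) < val w + 1; linarith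

lemma val_false_lt_one (w) : val (false :: w) < 1 := by
  have h := val_pos w
  show val w / (val w + 1) < 1
  rw [div_lt_one (by linarith)]; linarith

lemma val_inj : ∀ w w', val w = val w' → w = w'
  | [], [], _ => rfl
  | [], true :: w', h => absurd h.symm (by have := one_lt_val_true w'; intro h; rw [h] at this; exact lt_irrefl _ this)
  | [], false :: w', h => absurd h.symm (by have := val_false_lt_one w'; intro h; rw [h] at this; exact lt_irrefl _ this)
  | true :: w, [], h => absurd h (by have := one_lt_val_true w; intro h; rw [h] at this; exact lt_irrefl _ this)
  | false :: w, [], h => absurd h (by have := val_false_lt_one w; intro h; rw [h] at this; exact lt_irrefl _ this)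
  | true :: w, false :: w', h => by
      exact absurd h (by have h1 := one_lt_val_true w; have h2 := val_false_lt_one w'; intro h; rw [h] at h1; linarith)
  | false :: w, true :: w', h => by
      exact absurd h (by have h1 := one_lt_val_true w'; have h2 := val_false_lt_one w; intro h; rw [h] at h2; linarith)
  | true :: w, true :: w', h => by
      have : val w = val w' := by
        have : val w + 1 = val w' + 1 := h
        linarith
      rw [val_inj w w' this]
  | false :: w, false :: w', h => by
      have hw := val_pos w; have hw' := val_pos w'
      have : val w / (val w + 1) = val w' / (val w' + 1) := h
      have : val w = val w' := by
        field_simp at this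
        linarith
      rw [val_inj w w' this]

/-! ### blocks -/

def blocks : Bool → List ℕ → List Bool
  | _, [] => []
  | c, [a] => List.replicate (a - 1) c
  | c, a :: b :: t => List.replicate a c ++ blocks (!c) (b :: t)

lemma blocks_cons (c : Bool) (a : ℕ) {M : List ℕ} (h : M ≠ []) :
    blocks c (a :: M) = List.replicate a c ++ blocks (!c) M := by
  cases M with
  | nil => exact absurd rfl h
  | cons b t => rfl

lemma cfVal_cons (a : ℕ) {M : List ℕ} (h : M ≠ []) :
    cfVal (a :: M) = (a : ℚ) + 1 / cfVal M := by
  cases M with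
  | nil => exact absurd rfl h
  | cons b t => rfl

lemma one_le_cfVal : ∀ {M : List ℕ}, M ≠ [] → (∀ x ∈ M, 1 ≤ x) → 1 ≤ cfVal M
  | [], h, _ => absurd rfl h
  | [a], _, h2 => by
      have : 1 ≤ a := h2 a (by simp)
      show (1:ℚ) ≤ (a:ℚ)
      exact_mod_cast this
  | a :: b :: t, _, h2 => by
      have ha : 1 ≤ a := h2 a (by simp)
      have ih : 1 ≤ cfVal (b :: t) := one_le_cfVal (by simp) (fun x hx => h2 x (by simp [hx]))
      have hpos : 0 < cfVal (b :: t) := lt_of_lt_of_le one_pos ih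
      show (1:ℚ) ≤ (a:ℚ) + 1 / cfVal (b :: t)
      have : (1:ℚ) ≤ (a:ℚ) := by exact_mod_cast ha
      have : 0 < 1 / cfVal (b :: t) := by positivity
      linarith [(by exact_mod_cast ha : (1:ℚ) ≤ (a:ℚ))]

lemma val_replicate_true (n : ℕ) (w : List Bool) :
    val (List.replicate n true ++ w) = n + val w := by
  induction n with
  | zero => simp
  | succ n ih =>
      rw [List.replicate_succ, List.cons_append]
      show val (List.replicate n true ++ w) + 1 = _
      rw [ih]; push_cast; ring

lemma val_replicate_false (n : ℕ) (w : List Bool) :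
    val (List.replicate n false ++ w) = val w / (n * val w + 1) := by
  induction n with
  | zero => simp
  | succ n ih =>
      have hw := val_pos w
      rw [List.replicate_succ, List.cons_append]
      show val (List.replicate n false ++ w) / (val (List.replicate n false ++ w) + 1) = _
      rw [ih]
      have hd : (0:ℚ) < n * val w + 1 := by positivity
      rw [div_eq_div_iff (by positivity) (by positivity)]
      field_simp
      ring_nf
      push_cast; ring

lemma blocks_val : ∀ (M : List ℕ), M ≠ [] → (∀ x ∈ M, 1 ≤ x) →
    val (blocks true M) = cfVal M ∧ val (blocks false M) = (cfVal M)⁻¹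
  | [], h, _ => absurd rfl h
  | [a], _, h2 => by
      have ha : 1 ≤ a := h2 a (by simp)
      have hc : ((a - 1 : ℕ) : ℚ) = (a : ℚ) - 1 := by
        have h' : a - 1 + 1 = a := Nat.succ_pred_eq_of_pos ha
        have := congrArg (fun n : ℕ => (n : ℚ)) h'
        push_cast at this
        linarith
      constructor
      · show val (List.replicate (a-1) true) = (a:ℚ)
        have := val_replicate_true (a-1) []
        simpa [val, hc] using this
      · show val (List.replicate (a-1) false) = ((a:ℚ))⁻¹
        have := val_replicate_false (a-1) []
        simp only [List.append_nil] at this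
        rw [this]
        simp [val, hc]
  | a :: b :: t, _, h2 => by
      have ha : 1 ≤ a := h2 a (by simp)
      have ih := blocks_val (b :: t) (by simp) (fun x hx => h2 x (by simp [hx]))
      have h1 : 1 ≤ cfVal (b :: t) := one_le_cfVal (by simp) (fun x hx => h2 x (by simp [hx]))
      have hpos : 0 < cfVal (b :: t) := lt_of_lt_of_le one_pos h1
      have hcf : cfVal (a :: b :: t) = (a:ℚ) + 1 / cfVal (b :: t) := rfl
      constructor
      · rw [show blocks true (a :: b :: t) = List.replicate a true ++ blocks false (b :: t) from rfl,
          val_replicate_true, ih.2, hcf, inv_eq_one_div]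
      · rw [show blocks false (a :: b :: t) = List.replicate a false ++ blocks true (b :: t) from rfl,
          val_replicate_false, ih.1, hcf]
        have hne : (a:ℚ) + 1 / cfVal (b :: t) ≠ 0 := by positivity
        rw [inv_eq_one_div, div_eq_div_iff (by positivity) (by positivity)]
        field_simp


lemma blocks_true_val : ∀ {L : List ℕ}, L ≠ [] → (∀ x ∈ L.tail, 1 ≤ x) →
    0 < cfVal L → val (blocks true L) = cfVal L
  | [], h, _, _ => absurd rfl h
  | a :: M, _, ht, hpos => by
      by_cases ha : 1 ≤ a
      · exact (blocks_val (a :: M) (by simp) (by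
          intro x hx
          rcases List.mem_cons.1 hx with rfl | hx
          · exact ha
          · exact ht x hx)).1
      · have ha0 : a = 0 := by omega
        subst ha0
        cases M with
        | nil => simp [cfVal] at hpos
        | cons b t =>
            have : blocks true (0 :: b :: t) = blocks false (b :: t) := by
              rw [blocks_cons true 0 (by simp)]; simp
            rw [this, (blocks_val (b :: t) (by simp) (by intro x hx; exact ht x hx)).2,
              cfVal_cons 0 (by simp : (b :: t) ≠ [])]
            rw [inv_eq_one_div]
            push_cast
            ring

lemma replicate_prefix (c : Bool) {m n : ℕ} (h : m ≤ n) :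
    List.replicate m c <+: List.replicate n c :=
  ⟨List.replicate (n - m) c, by rw [← List.replicate_add, Nat.add_sub_cancel' h]⟩

lemma eq_replicate_of_prefix {p : List Bool} {n : ℕ} {c : Bool}
    (h : p <+: List.replicate n c) : p = List.replicate p.length c ∧ p.length ≤ n := by
  constructor
  · rw [List.eq_replicate_length]
    intro x hx
    exact List.eq_of_mem_replicate (h.sublist.mem hx)
  · simpa using h.length_le

lemma blocks_take_prefix : ∀ (L : List ℕ) (c : Bool) (ℓ b : ℕ) (h : ℓ < L.length),
    b ≤ L.get ⟨ℓ, h⟩ → blocks c (L.take ℓ ++ [b]) <+: blocks c L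
  | [], _, ℓ, _, h, _ => absurd h (by simp)
  | a :: M, c, 0, b, h, hb => by
      simp only [List.take_zero, List.nil_append]
      have hba : b ≤ a := hb
      cases M with
      | nil =>
          show List.replicate (b - 1) c <+: List.replicate (a - 1) c
          exact replicate_prefix c (by omega)
      | cons m t =>
          rw [blocks_cons c a (by simp)]
          exact (replicate_prefix c (by omega : b - 1 ≤ a)).trans (List.prefix_append _ _)
  | a :: M, c, ℓ + 1, b, h, hb => by
      have hM : ℓ < M.length := by simpa using h
      have hb' : b ≤ M.get ⟨ℓ, hM⟩ := hb
      have ih := blocks_take_prefix M (!c) ℓ b hM hb'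
      rw [List.take_succ_cons, List.cons_append,
        blocks_cons c a (by simp : M.take ℓ ++ [b] ≠ []),
        blocks_cons c a (by intro hc; rw [hc] at hM; simp at hM)]
      exact (List.prefix_append_right_inj _).2 ih

lemma prefix_of_blocks : ∀ (M : List ℕ) (c : Bool) (p : List Bool), M ≠ [] →
    (∀ x ∈ M, 1 ≤ x) → p <+: blocks c M →
    ∃ ℓ, ∃ h : ℓ < M.length, ∃ b, 1 ≤ b ∧ b ≤ M.get ⟨ℓ, h⟩ ∧
      blocks c (M.take ℓ ++ [b]) = p
  | [], _, _, h, _, _ => absurd rfl h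
  | [a], c, p, _, h1, hp => by
      have ha : 1 ≤ a := h1 a (by simp)
      obtain ⟨hrep, hlen⟩ := eq_replicate_of_prefix (p := p) (n := a - 1) (c := c) hp
      refine ⟨0, by simp, p.length + 1, by omega, by simpa using (by omega : p.length + 1 ≤ a), ?_⟩
      show blocks c [p.length + 1] = p
      show List.replicate (p.length + 1 - 1) c = p
      simpa using hrep.symm
  | a :: m :: t, c, p, _, h1, hp => by
      have ha : 1 ≤ a := h1 a (by simp)
      have hM' : (m :: t : List ℕ) ≠ [] := by simp
      rw [blocks_cons c a hM'] at hp
      by_cases hlen : p.length < a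
      · have hpre : p <+: List.replicate a c :=
          List.prefix_of_prefix_length_le hp (List.prefix_append _ _) (by simpa using le_of_lt hlen)
        obtain ⟨hrep, _⟩ := eq_replicate_of_prefix hpre
        refine ⟨0, by simp, p.length + 1, by omega, by simpa using (by omega : p.length + 1 ≤ a), ?_⟩
        show blocks c [p.length + 1] = p
        show List.replicate (p.length + 1 - 1) c = p
        simpa using hrep.symm
      · have hpre : List.replicate a c <+: p :=
          List.prefix_of_prefix_length_le (List.prefix_append _ _) hp (by simpa using le_of_not_gt hlen)
        obtain ⟨q, rfl⟩ := hpre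
        have hq : q <+: blocks (!c) (m :: t) := (List.prefix_append_right_inj _).1 hp
        obtain ⟨ℓ, hℓ, b, hb1, hb2, heq⟩ :=
          prefix_of_blocks (m :: t) (!c) q hM' (fun x hx => h1 x (by simp [hx])) hq
        refine ⟨ℓ + 1, by simpa using Nat.succ_lt_succ hℓ, b, hb1, hb2, ?_⟩
        rw [List.take_succ_cons, List.cons_append,
          blocks_cons c a (by simp : (m :: t).take ℓ ++ [b] ≠ []), heq]

lemma prefix_of_blocks_true {L : List ℕ} (h0 : L ≠ []) (ht : ∀ x ∈ L.tail, 1 ≤ x)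
    (hpos : 0 < cfVal L) {p : List Bool} (hp : p <+: blocks true L) :
    ∃ ℓ, ∃ h : ℓ < L.length, ∃ b, 1 ≤ b ∧ b ≤ L.get ⟨ℓ, h⟩ ∧
      blocks true (L.take ℓ ++ [b]) = p := by
  cases L with
  | nil => exact absurd rfl h0
  | cons a M =>
      by_cases ha : 1 ≤ a
      · exact prefix_of_blocks (a :: M) true p (by simp)
          (fun x hx => by rcases List.mem_cons.1 hx with rfl | hx; exacts [ha, ht x hx]) hp
      · have ha0 : a = 0 := by omega
        subst ha0
        cases M with
        | nil => simp [cfVal] at hpos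
        | cons m t =>
            have hrw : blocks true (0 :: m :: t) = blocks false (m :: t) := by
              rw [blocks_cons true 0 (by simp)]; simp
            rw [hrw] at hp
            obtain ⟨ℓ, hℓ, b, hb1, hb2, heq⟩ :=
              prefix_of_blocks (m :: t) false p (by simp) (fun x hx => ht x hx) hp
            refine ⟨ℓ + 1, by simpa using Nat.succ_lt_succ hℓ, b, hb1, hb2, ?_⟩
            rw [List.take_succ_cons, List.cons_append,
              blocks_cons true 0 (by simp : (m :: t).take ℓ ++ [b] ≠ [])]
            simpa using heq

/-! ### truncations are expansions -/

lemma trunc_spec {L : List ℕ} (ht : ∀ x ∈ L.tail, 1 ≤ x) {ℓ b : ℕ} (hb : 1 ≤ b)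
    (hl : ℓ < L.length) :
    ((L.take ℓ ++ [b]) ≠ [] ∧ (∀ x ∈ (L.take ℓ ++ [b]).tail, 1 ≤ x)) ∧
      0 < cfVal (L.take ℓ ++ [b]) := by
  cases ℓ with
  | zero =>
      simp only [List.take_zero, List.nil_append]
      refine ⟨⟨by simp, by simp⟩, ?_⟩
      show (0:ℚ) < (b:ℚ)
      exact_mod_cast hb
  | succ ℓ =>
      cases L with
      | nil => simp at hl
      | cons a M =>
          have hX : ∀ x ∈ M.take ℓ ++ [b], 1 ≤ x := by
            intro x hx
            rcases List.mem_append.1 hx with hx | hx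
            · exact ht x (List.mem_of_mem_take hx)
            · simp at hx; omega
          have hXne : M.take ℓ ++ [b] ≠ [] := by simp
          rw [List.take_succ_cons, List.cons_append]
          refine ⟨⟨by simp, hX⟩, ?_⟩
          rw [cfVal_cons a hXne]
          have h1 := one_le_cfVal hXne hX
          have : (0:ℚ) < 1 / cfVal (M.take ℓ ++ [b]) := by positivity
          have hcast : (0:ℚ) ≤ (a:ℚ) := Nat.cast_nonneg a
          linarith

/-! ### existence of expansions (Euclid) -/

def euclid : ℕ → ℕ → ℕ → List ℕ
  | 0, _, _ => []
  | fuel + 1, p, s => if p % s = 0 then [p / s] else (p / s) :: euclid fuel s (p % s)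

lemma euclid_spec : ∀ (fuel p s : ℕ), 1 ≤ s → s ≤ fuel →
    euclid (fuel) p s ≠ [] ∧ (euclid fuel p s).head? = some (p / s) ∧
      (∀ x ∈ (euclid fuel p s).tail, 1 ≤ x) ∧ cfVal (euclid fuel p s) = (p : ℚ) / s
  | 0, _, _, hs, hf => by omega
  | fuel + 1, p, s, hs, hf => by
      by_cases h : p % s = 0
      · have hdvd : s ∣ p := Nat.dvd_of_mod_eq_zero h
        simp only [euclid, h, if_pos]
        refine ⟨by simp, by simp, by simp, ?_⟩
        show ((p / s : ℕ) : ℚ) = (p : ℚ) / s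
        rw [Nat.cast_div hdvd (by exact_mod_cast (by omega : s ≠ 0))]
      · have hr1 : 1 ≤ p % s := Nat.one_le_iff_ne_zero.2 h
        have hrs : p % s < s := Nat.mod_lt _ (by omega)
        obtain ⟨hne, hhead, htail, hval⟩ := euclid_spec fuel s (p % s) hr1 (by omega)
        simp only [euclid, h, if_neg, ite_false]
        have hrec : euclid fuel s (p % s) ≠ [] := hne
        refine ⟨by simp, by simp, ?_, ?_⟩
        · intro x hx
          simp only [List.tail_cons] at hx
          cases hE : euclid fuel s (p % s) with
          | nil => rw [hE] at hx; simp at hx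
          | cons y ys =>
              rw [hE] at hx hhead htail
              simp only [List.head?_cons, Option.some.injEq] at hhead
              rcases List.mem_cons.1 hx with rfl | hx
              · subst hhead
                rw [Nat.one_le_div_iff (by omega)]
                omega
              · exact htail x hx
        · rw [cfVal_cons _ hrec, hval]
          have hsQ : (s:ℚ) ≠ 0 := by exact_mod_cast (by omega : s ≠ 0)
          have hrQ : ((p % s : ℕ):ℚ) ≠ 0 := by exact_mod_cast (by omega : p % s ≠ 0)
          have key : ((s:ℚ)) * ((p / s : ℕ):ℚ) + ((p % s : ℕ):ℚ) = (p:ℚ) := by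
            exact_mod_cast congrArg (fun n : ℕ => (n:ℚ)) (Nat.div_add_mod p s)
          rw [one_div_div]
          field_simp
          linarith

lemma exists_expansion {q : ℚ} (hq : 0 < q) : ∃ L, IsExpansion L q := by
  obtain ⟨hne, _, htail, hval⟩ := euclid_spec q.den q.num.toNat q.den q.pos (le_refl _)
  refine ⟨euclid q.den q.num.toNat q.den, hne, htail, ?_⟩
  rw [hval]
  have hnum : ((q.num.toNat : ℕ) : ℚ) = (q.num : ℚ) := by
    exact_mod_cast congrArg (fun n : ℤ => (n:ℚ)) (Int.toNat_of_nonneg (le_of_lt (Rat.num_pos.2 hq)))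
  rw [hnum, Rat.num_div_den]

/-! ### the canonical word and the bridge -/

lemma blocks_eq_of_expansions {L L' : List ℕ} {q : ℚ} (h : IsExpansion L q)
    (h' : IsExpansion L' q) (hq : 0 < q) : blocks true L = blocks true L' := by
  apply val_inj
  rw [blocks_true_val h.1 h.2.1 (h.2.2 ▸ hq), blocks_true_val h'.1 h'.2.1 (h'.2.2 ▸ hq),
    h.2.2, h'.2.2]

lemma precedes_iff {α β : ℚ} (hα : 0 < α) (hβ : 0 < β) :
    Precedes α β ↔ ∃ L L' : List ℕ, IsExpansion L α ∧ IsExpansion L' β ∧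
      blocks true L <+: blocks true L' := by
  constructor
  · rintro ⟨L, hL, ℓ, h, b, hb1, hb2, hval⟩
    obtain ⟨⟨hTne, hTt⟩, hTpos⟩ := trunc_spec hL.2.1 hb1 h
    exact ⟨L.take ℓ ++ [b], L, ⟨hTne, hTt, hval⟩, hL,
      blocks_take_prefix L true ℓ b h hb2⟩
  · rintro ⟨L, L', hL, hL', hpre⟩
    have hβpos : 0 < cfVal L' := hL'.2.2 ▸ hβ
    obtain ⟨ℓ, h, b, hb1, hb2, heq⟩ :=
      prefix_of_blocks_true hL'.1 hL'.2.1 hβpos hpre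
    obtain ⟨⟨hTne, hTt⟩, hTpos⟩ := trunc_spec hL'.2.1 hb1 h
    have hv : cfVal (L'.take ℓ ++ [b]) = α := by
      have h1 : val (blocks true (L'.take ℓ ++ [b])) = cfVal (L'.take ℓ ++ [b]) :=
        blocks_true_val hTne hTt hTpos
      have h2 : val (blocks true L) = α := by
        rw [blocks_true_val hL.1 hL.2.1 (hL.2.2 ▸ hα), hL.2.2]
      rw [heq, h2] at h1
      exact h1.symm
    exact ⟨L', hL', ℓ, h, b, hb1, hb2, hv⟩


/-- The precedence relation `≺` is a partial order on the positive
rationals: it is reflexive, antisymmetric and transitive. -/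
theorem precedes_is_partial_order :
    (∀ α : ℚ, 0 < α → Precedes α α) ∧
    (∀ α β : ℚ, 0 < α → 0 < β → Precedes α β → Precedes β α → α = β) ∧
    (∀ α β γ : ℚ, 0 < α → 0 < β → 0 < γ → Precedes α β → Precedes β γ → Precedes α γ) := by
  refine ⟨?_, ?_, ?_⟩
  · intro α hα
    obtain ⟨L, hL⟩ := exists_expansion hα
    exact (precedes_iff hα hα).2 ⟨L, L, hL, hL, List.prefix_rfl⟩
  · intro α β hα hβ h1 h2
    obtain ⟨L1, L2, hL1, hL2, p12⟩ := (precedes_iff hα hβ).1 h1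
    obtain ⟨L3, L4, hL3, hL4, p34⟩ := (precedes_iff hβ hα).1 h2
    have e23 : blocks true L2 = blocks true L3 := blocks_eq_of_expansions hL2 hL3 hβ
    have e41 : blocks true L4 = blocks true L1 := blocks_eq_of_expansions hL4 hL1 hα
    have pb : blocks true L2 <+: blocks true L1 := by rw [e23]; rw [← e41]; exact p34
    have heq : blocks true L1 = blocks true L2 :=
      p12.eq_of_length (le_antisymm p12.length_le pb.length_le)
    have vα : val (blocks true L1) = α := by
      rw [blocks_true_val hL1.1 hL1.2.1 (hL1.2.2 ▸ hα), hL1.2.2]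
    have vβ : val (blocks true L2) = β := by
      rw [blocks_true_val hL2.1 hL2.2.1 (hL2.2.2 ▸ hβ), hL2.2.2]
    rw [← vα, heq, vβ]
  · intro α β γ hα hβ hγ h1 h2
    obtain ⟨L1, L2, hL1, hL2, p12⟩ := (precedes_iff hα hβ).1 h1
    obtain ⟨L3, L4, hL3, hL4, p34⟩ := (precedes_iff hβ hγ).1 h2
    have e23 : blocks true L2 = blocks true L3 := blocks_eq_of_expansions hL2 hL3 hβ
    exact (precedes_iff hα hγ).2 ⟨L1, L4, hL1, hL4, (e23 ▸ p12).trans p34⟩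


end ResolutionGraph
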